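/- Suppose s is a real polynomial of degree d with s(0) = 0 and 1−ε ≤ s(x) ≤ 1 for all integers x in [t, N], where 1 ≤ t < N. Assume the Coppersmith–Rivlin bound as a hypothesis (with constants a, b > 0). Then 1 ≤ ε·a·e^{b d²/(N−t) + 4d√(tN)/(N−t)}. -/

import Mathlib

/-! Write `q = 1 - s`. Shifted by `t` and divided by `ε`, `q` is bounded by `1` at the integers of
`[0, N - t]`, so the Coppersmith–Rivlin bound with `δ = (N - t) / d²` gives
`|q| ≤ M := ε a e^{b d² / (N - t)}` on the whole real interval `[t, N]`.

A polynomial of degree `d` bounded by `M` on `[-1, 1]` is bounded by `M T_d(y)` at every `y ≥ 1`: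
interpolate it at the extrema `cos (kπ/d)` of `T_d`, where `T_d = (-1)^k`; beyond the nodes the
Lagrange basis polynomials alternate in sign, so `∑ |L_k(y)| = ∑ (-1)^k L_k(y) = T_d(y)`.
The affine map taking `[-1, 1]` onto `[N, t]` takes `y = (N + t)/(N - t) = cosh θ` to `0`, and
`T_d(cosh θ) = cosh (dθ) ≤ e^{dθ}` with `θ ≤ 4√(tN)/(N - t)`. Hence `1 = |q(0)| ≤ M e^{dθ}`. -/

open Polynomial Real Finset

theorem abs_eval_le_mul_sum_abs_eval_basis {ι : Type*} [DecidableEq ι] {s : Finset ι}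
    {v : ι → ℝ} (hvs : Set.InjOn v s) {f : ℝ[X]} (hf : f.degree < #s) {M : ℝ}
    (hM : ∀ i ∈ s, |f.eval (v i)| ≤ M) (y : ℝ) :
    |f.eval y| ≤ M * ∑ i ∈ s, |(Lagrange.basis s v i).eval y| := by
  rw [Lagrange.eq_interpolate hvs hf, Lagrange.interpolate_apply, eval_finsetSum, mul_sum]
  refine (abs_sum_le_sum_abs _ _).trans (sum_le_sum fun i hi => ?_)
  rw [eval_mul, eval_C, abs_mul]
  exact mul_le_mul_of_nonneg_right (hM i hi) (abs_nonneg _)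

theorem neg_one_pow_mul_eval_basis_nonneg {n : ℕ} {v : ℕ → ℝ} (hv : StrictAntiOn v (range n))
    {y : ℝ} (hy : ∀ j ∈ range n, v j ≤ y) {k : ℕ} (hk : k ∈ range n) :
    0 ≤ (-1) ^ k * (Lagrange.basis (range n) v k).eval y := by
  have hsign : (-1 : ℝ) ^ k = ∏ j ∈ (range n).erase k, if j < k then -1 else 1 := by
    have : ((range n).erase k).filter (· < k) = range k := by
      ext j; simp only [mem_filter, mem_erase, mem_range] at hk ⊢; omega
    rw [prod_ite, prod_const, prod_const_one, mul_one, this, card_range]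
  rw [hsign, Lagrange.basis, eval_prod, ← prod_mul_distrib]
  refine prod_nonneg fun j hj => ?_
  obtain ⟨hjk, hj⟩ := mem_erase.mp hj
  simp only [Lagrange.basisDivisor, eval_mul, eval_C, eval_sub, eval_X]
  have hyj := sub_nonneg.mpr (hy j hj)
  -- the factor `(y - v j) / (v k - v j)` of `L_k(y)` is nonpositive exactly when `j < k`
  split_ifs with hlt
  · have := hv hj hk hlt
    have : (v k - v j)⁻¹ ≤ 0 := inv_nonpos.mpr (by linarith)
    nlinarith
  · have := hv hk hj (by omega)
    have : 0 ≤ (v k - v j)⁻¹ := inv_nonneg.mpr (by linarith)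
    positivity

noncomputable def chebyshevExtremum (d k : ℕ) : ℝ := cos (k * π / d)

theorem strictAntiOn_chebyshevExtremum {d : ℕ} (hd : d ≠ 0) :
    StrictAntiOn (chebyshevExtremum d) (range (d + 1)) := by
  have hd' : (0 : ℝ) < d := by positivity
  have hangle : ∀ k ∈ range (d + 1), k * π / d ∈ Set.Icc 0 π := fun k hk => by
    have : (k : ℝ) ≤ d := by exact_mod_cast Nat.lt_succ_iff.mp (mem_range.mp hk)
    exact ⟨by positivity, by rw [div_le_iff₀ hd']; nlinarith [pi_pos]⟩
  intro i hi j hj hij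
  refine strictAntiOn_cos (hangle i hi) (hangle j hj) ?_
  have : (i : ℝ) < j := by exact_mod_cast hij
  gcongr

theorem eval_T_chebyshevExtremum {d : ℕ} (hd : d ≠ 0) (k : ℕ) :
    (Chebyshev.T ℝ d).eval (chebyshevExtremum d k) = (-1) ^ k := by
  rw [chebyshevExtremum, Chebyshev.T_real_cos, Int.cast_natCast,
    mul_div_cancel₀ _ (Nat.cast_ne_zero.mpr hd), cos_nat_mul_pi]

theorem abs_eval_le_mul_eval_T {d : ℕ} (hd : d ≠ 0) {f : ℝ[X]} (hf : f.natDegree ≤ d) {M : ℝ}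
    (hM : ∀ x ∈ Set.Icc (-1) 1, |f.eval x| ≤ M) {y : ℝ} (hy : 1 ≤ y) :
    |f.eval y| ≤ M * (Chebyshev.T ℝ d).eval y := by
  set v := chebyshevExtremum d
  have hv := strictAntiOn_chebyshevExtremum hd
  have hdeg : ∀ g : ℝ[X], g.natDegree ≤ d → g.degree < #(range (d + 1)) := fun g hg => by
    rw [card_range]
    exact (degree_le_of_natDegree_le hg).trans_lt (by exact_mod_cast Nat.lt_succ_self d)
  have hT : (Chebyshev.T ℝ d).eval y =
      ∑ k ∈ range (d + 1), (-1) ^ k * (Lagrange.basis (range (d + 1)) v k).eval y := by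
    conv_lhs => rw [Lagrange.eq_interpolate hv.injOn (hdeg _ (Chebyshev.natDegree_T ℝ d).le)]
    simp only [Lagrange.interpolate_apply, eval_finsetSum, eval_mul, eval_C,
      eval_T_chebyshevExtremum hd, v]
  have habs : ∀ k ∈ range (d + 1), |(Lagrange.basis (range (d + 1)) v k).eval y| =
      (-1) ^ k * (Lagrange.basis (range (d + 1)) v k).eval y := fun k hk => by
    rw [← abs_of_nonneg (neg_one_pow_mul_eval_basis_nonneg hv
      (fun j _ => (cos_le_one _).trans hy) hk), abs_mul, abs_neg_one_pow, one_mul]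
  calc |f.eval y|
      ≤ M * ∑ k ∈ range (d + 1), |(Lagrange.basis (range (d + 1)) v k).eval y| :=
        abs_eval_le_mul_sum_abs_eval_basis hv.injOn (hdeg f hf)
          (fun k _ => hM _ ⟨neg_one_le_cos _, cos_le_one _⟩) y
    _ = M * (Chebyshev.T ℝ d).eval y := by rw [hT, sum_congr rfl habs]

theorem eval_T_le_exp_mul_arcosh (n : ℕ) {y : ℝ} (hy : 1 ≤ y) :
    (Chebyshev.T ℝ n).eval y ≤ exp (n * arcosh y) := by
  have hθ : 0 ≤ n * arcosh y := mul_nonneg n.cast_nonneg (arcosh_nonneg hy)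
  conv_lhs => rw [← cosh_arcosh hy]
  rw [Chebyshev.T_real_cosh, Int.cast_natCast, cosh_eq]
  linarith [exp_le_exp.mpr (neg_le_self hθ)]

theorem arcosh_add_div_sub_le {α β : ℝ} (hα : 0 < α) (hαβ : α < β) :
    arcosh ((β + α) / (β - α)) ≤ 4 * √(α * β) / (β - α) := by
  set y := (β + α) / (β - α)
  have hβα : 0 < β - α := sub_pos.mpr hαβ
  have hy : 1 ≤ y := by rw [le_div_iff₀ hβα]; linarith
  have hsqrt : √(y ^ 2 - 1) = 2 * √(α * β) / (β - α) := by
    have : y ^ 2 - 1 = (2 * √(α * β) / (β - α)) ^ 2 := by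
      simp only [y]
      rw [div_pow (2 * √(α * β)), mul_pow, sq_sqrt (mul_pos hα (hα.trans hαβ)).le]
      field_simp
      ring
    rw [this, sqrt_sq (div_nonneg (by positivity) hβα.le)]
  have hα_le : α ≤ √(α * β) := le_sqrt_of_sq_le (by nlinarith)
  calc arcosh y ≤ y + √(y ^ 2 - 1) - 1 := log_le_sub_one_of_pos (by positivity)
    _ = (2 * α + 2 * √(α * β)) / (β - α) := by rw [hsqrt]; simp only [y]; field_simp; ring
    _ ≤ 4 * √(α * β) / (β - α) := by gcongr; linarith

theorem abs_eval_zero_le_of_forall_mem_Icc {d : ℕ} (hd : d ≠ 0) {f : ℝ[X]} (hf : f.natDegree ≤ d)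
    {α β M : ℝ} (hα : 0 < α) (hαβ : α < β) (hM : ∀ x ∈ Set.Icc α β, |f.eval x| ≤ M) :
    |f.eval 0| ≤ M * exp (4 * d * √(α * β) / (β - α)) := by
  have hβα : 0 < β - α := sub_pos.mpr hαβ
  set g := f.comp (C ((β + α) / 2) - C ((β - α) / 2) * X)
  have hg : ∀ x, g.eval x = f.eval ((β + α) / 2 - (β - α) / 2 * x) := fun x => by
    simp [g, eval_comp]
  have hgdeg : g.natDegree ≤ d := natDegree_comp_le.trans <| by
    have : (C ((β + α) / 2) - C ((β - α) / 2) * X).natDegree ≤ 1 := by compute_degree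
    nlinarith
  have hgM : ∀ x ∈ Set.Icc (-1) 1, |g.eval x| ≤ M := fun x ⟨h1, h2⟩ => by
    rw [hg]; exact hM _ ⟨by nlinarith, by nlinarith⟩
  have hy : 1 ≤ (β + α) / (β - α) := by rw [le_div_iff₀ hβα]; linarith
  have hM0 : 0 ≤ M := (abs_nonneg _).trans (hM α ⟨le_rfl, hαβ.le⟩)
  have hf0 : f.eval 0 = g.eval ((β + α) / (β - α)) := by
    rw [hg]; congr 1; field_simp; ring
  calc |f.eval 0| ≤ M * (Chebyshev.T ℝ d).eval ((β + α) / (β - α)) := by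
        rw [hf0]; exact abs_eval_le_mul_eval_T hd hgdeg hgM hy
    _ ≤ M * exp (d * arcosh ((β + α) / (β - α))) := by gcongr; exact eval_T_le_exp_mul_arcosh d hy
    _ ≤ M * exp (d * (4 * √(α * β) / (β - α))) := by
        gcongr; exact arcosh_add_div_sub_le hα hαβ
    _ = M * exp (4 * d * √(α * β) / (β - α)) := by ring_nf

def CoppersmithRivlinBound (a b : ℝ) : Prop :=
  ∀ (p : ℝ[X]) (n : ℕ) (δ : ℝ), 0 < δ →
    δ * (p.natDegree : ℝ) ^ 2 ≤ n →
    (∀ k : ℕ, k ≤ n → |p.eval (k : ℝ)| ≤ 1) →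
    ∀ x : ℝ, 0 ≤ x → x ≤ n → |p.eval x| < a * exp (b / δ)

theorem CoppersmithRivlinBound.abs_eval_lt {a b : ℝ} (hCR : CoppersmithRivlinBound a b)
    {t N d : ℕ} (htN : t ≤ N) {ε : ℝ} (hε : 0 < ε) {q : ℝ[X]} (hq : q.natDegree ≤ d)
    (hqk : ∀ k : ℕ, t ≤ k → k ≤ N → |q.eval (k : ℝ)| ≤ ε) {δ : ℝ} (hδ : 0 < δ)
    (hδd : δ * d ^ 2 ≤ N - t) {z : ℝ} (htz : t ≤ z) (hzN : z ≤ N) :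
    |q.eval z| < ε * a * exp (b / δ) := by
  set p := C ε⁻¹ * q.comp (X + C (t : ℝ))
  have hp : ∀ x, p.eval x = ε⁻¹ * q.eval (x + t) := fun x => by simp [p, eval_comp]
  have hpdeg : p.natDegree ≤ d := natDegree_C_mul_le _ _ |>.trans <| by
    rw [natDegree_comp, natDegree_X_add_C, mul_one]; exact hq
  have hn : ((N - t : ℕ) : ℝ) = N - t := Nat.cast_sub htN
  have hpk : ∀ k : ℕ, k ≤ N - t → |p.eval (k : ℝ)| ≤ 1 := fun k hk => by
    have := hqk (k + t) (by omega) (by omega)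
    push_cast at this
    rwa [hp, abs_mul, abs_inv, abs_of_pos hε, inv_mul_le_iff₀ hε, mul_one]
  have hpδ : δ * (p.natDegree : ℝ) ^ 2 ≤ (N - t : ℕ) := by
    rw [hn]; refine le_trans ?_ hδd; gcongr
  have := hCR p (N - t) δ hδ hpδ hpk (z - t) (by linarith) (by rw [hn]; linarith)
  rwa [hp, sub_add_cancel, abs_mul, abs_inv, abs_of_pos hε, inv_mul_lt_iff₀ hε, ← mul_assoc]
    at this

theorem quantum_search_error_lower_bound_t_solutions_general (N t d : ℕ)
    (ht : 1 ≤ t) (htN : t < N) (hd : 1 ≤ d)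
    (ε : ℝ) (hε : 0 < ε) (s : Polynomial ℝ)
    (hdeg : s.degree ≤ d)
    (hs0 : s.eval 0 = 0)
    (hs : ∀ x : ℕ, t ≤ x → x ≤ N → 1 - ε ≤ s.eval (x : ℝ) ∧ s.eval (x : ℝ) ≤ 1)
    (a b : ℝ)
    (hCR : ∀ (p : Polynomial ℝ) (n : ℕ) (δ : ℝ), 0 < δ →
      δ * (p.natDegree : ℝ) ^ 2 ≤ n →
      (∀ k : ℕ, k ≤ n → |p.eval (k : ℝ)| ≤ 1) →
      ∀ x : ℝ, 0 ≤ x → x ≤ n → |p.eval x| < a * Real.exp (b / δ)) :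
    1 ≤ ε * a * Real.exp (b * d ^ 2 / (N - t) + 4 * d * Real.sqrt (t * N) / (N - t)) := by
  have hqd : (1 - s).natDegree ≤ d :=
    (natDegree_sub_le _ _).trans (by simpa using natDegree_le_iff_degree_le.mpr hdeg)
  have hqk : ∀ k : ℕ, t ≤ k → k ≤ N → |(1 - s).eval (k : ℝ)| ≤ ε := fun k h1 h2 => by
    obtain ⟨hlo, hhi⟩ := hs k h1 h2
    rw [eval_sub, eval_one, abs_le]; constructor <;> linarith
  have htN' : (t : ℝ) < N := by exact_mod_cast htN
  have hbound : ∀ z ∈ Set.Icc (t : ℝ) N, |(1 - s).eval z| ≤ ε * a * exp (b * d ^ 2 / (N - t)) :=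
    fun z hz => by
      have := CoppersmithRivlinBound.abs_eval_lt hCR htN.le hε hqd hqk (δ := (N - t) / d ^ 2)
        (div_pos (sub_pos.mpr htN') (by positivity)) (by field_simp; rfl) hz.1 hz.2
      rw [div_div_eq_mul_div] at this
      exact this.le
  have := abs_eval_zero_le_of_forall_mem_Icc (by omega) hqd (by positivity) htN' hbound
  rwa [eval_sub, eval_one, hs0, sub_zero, abs_one, mul_assoc, ← exp_add] at this

theorem quantum_search_error_lower_bound_t_solutions (N t d : ℕ)
    (ht : 1 ≤ t) (htN : t < N) (hd : 1 ≤ d)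
    (ε : ℝ) (hε : 0 < ε) (s : Polynomial ℝ)
    (hdeg : s.degree ≤ d)
    (hs0 : s.eval 0 = 0)
    (hs : ∀ x : ℕ, t ≤ x → x ≤ N → 1 - ε ≤ s.eval (x : ℝ) ∧ s.eval (x : ℝ) ≤ 1)
    (a b : ℝ) (ha : 0 < a) (hb : 0 < b)
    (hCR : ∀ (p : Polynomial ℝ) (n : ℕ) (δ : ℝ), 0 < δ →
      δ * (p.natDegree : ℝ) ^ 2 ≤ n →
      (∀ k : ℕ, k ≤ n → |p.eval (k : ℝ)| ≤ 1) →
      ∀ x : ℝ, 0 ≤ x → x ≤ n → |p.eval x| < a * Real.exp (b / δ)) :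
    1 ≤ ε * a * Real.exp (b * d ^ 2 / (N - t) + 4 * d * Real.sqrt (t * N) / (N - t)) :=
  quantum_search_error_lower_bound_t_solutions_general N t d ht htN hd ε hε s hdeg hs0 hs a b hCR
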